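/- In the Eisenberg–Noe setting (α_x = α_L = 1) under the regularity assumption (p̄_i > 0 and Σ_{j=1}^n π_{ij} < 1 for every i ≤ n), let X : Ω → ℝⁿ₊ be an integrable random endowment vector. Then for every bank i ≤ n (Jensen upper bounds): 𝔼[V_i(X)] ≤ V_i(𝔼[X]) and 𝔼[p_i(X)] ≤ p_i(𝔼[X]). -/

import Mathlib

open Matrix BigOperators MeasureTheory

noncomputable section

/-- Total liabilities `p̄_i = Σ_{j=1}^{n+1} L_{ij}`. -/
def pbar {n : ℕ} (L : Matrix (Fin n) (Fin (n + 1)) ℝ) (i : Fin n) : ℝ :=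
  ∑ j, L i j

/-- Relative liabilities `π_{ij} = L_{ij} / p̄_i` if `p̄_i > 0`, else `0`. -/
def relLiab {n : ℕ} (L : Matrix (Fin n) (Fin (n + 1)) ℝ) (i j : Fin n) : ℝ :=
  if 0 < pbar L i then L i j.castSucc / pbar L i else 0

/-- `p` is the greatest clearing payment vector for endowments `x` in the Eisenberg–Noe
setting: the greatest fixed point of `p ↦ p̄ ∧ (x + Πᵀ p)` on `[0, p̄]`. -/
def IsGreatestClearingPayment {n : ℕ} (L : Matrix (Fin n) (Fin (n + 1)) ℝ)
    (x p : Fin n → ℝ) : Prop :=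
  IsGreatest {q : Fin n → ℝ | (∀ i, 0 ≤ q i ∧ q i ≤ pbar L i) ∧
    ∀ i, q i = min (pbar L i) (x i + ∑ j, relLiab L j i * q j)} p

/-!
Write `Φₓ(p) = p̄ ∧ (x + Πᵀ p)` for the clearing map. Since `min` is monotone and `1`-Lipschitz
in its second argument and the column sums of `Π` are bounded by some `c < 1`, the positive
parts of a post-fixed point `q ≤ Φ_y(q)` over a pre-fixed point `Φₓ(p) ≤ p` satisfy
`(1 - c) ∑ (q - p)⁺ ≤ ∑ (y - x)⁺`. For `x = y` this is a comparison principle (every post-fixed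
point lies below every fixed point), and in general it makes the clearing payment Lipschitz in
the endowment, hence `P ∘ X` measurable and, being bounded by `p̄`, integrable.
Since `Φ` is affine before the truncation by `p̄`, `𝔼[P(X)] = 𝔼[Φ_X(P(X))] ≤ Φ_{𝔼X}(𝔼[P(X)])`,
so by comparison `𝔼[P(X)] ≤ P(𝔼X)`; the bound on `V` follows since `V` is affine and monotone
in the payments.
-/

open Finset

lemma exists_lt_forall_le_of_forall_lt {ι α : Type*} [Finite ι] [LinearOrder α] [NoMinOrder α]
    {f : ι → α} {a : α} (h : ∀ i, f i < a) : ∃ c < a, ∀ i, f i ≤ c := by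
  rcases isEmpty_or_nonempty ι with hι | hι
  · obtain ⟨c, hc⟩ := exists_lt a
    exact ⟨c, hc, isEmptyElim⟩
  · obtain ⟨j, hj⟩ := Finite.exists_max f
    exact ⟨f j, h j, hj⟩

lemma relLiab_nonneg {n : ℕ} {L : Matrix (Fin n) (Fin (n + 1)) ℝ} (hL : ∀ i j, 0 ≤ L i j)
    (i j : Fin n) : 0 ≤ relLiab L i j := by
  unfold relLiab
  split_ifs with h
  · exact div_nonneg (hL i j.castSucc) h.le
  · exact le_rfl

section ClearingMap

variable {ι : Type*} [Fintype ι] (π : ι → ι → ℝ) (b : ι → ℝ)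

def assets (x p : ι → ℝ) (i : ι) : ℝ :=
  x i + ∑ j, π j i * p j

def clearingMap (x p : ι → ℝ) (i : ι) : ℝ :=
  min (b i) (assets π x p i)

variable {π b}

lemma assets_mono (hπ : ∀ i j, 0 ≤ π i j) (x : ι → ℝ) : Monotone (assets π x) :=
  fun _ _ hpq i => add_le_add_right (sum_le_sum fun j _ =>
    mul_le_mul_of_nonneg_left (hpq j) (hπ j i)) _

lemma clearingMap_sub_clearingMap_le (hπ : ∀ i j, 0 ≤ π i j) (x y p q : ι → ℝ) (i : ι) :
    clearingMap π b y q i - clearingMap π b x p i ≤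
      (y i - x i)⁺ + ∑ j, π j i * (q j - p j)⁺ := by
  have hassets : assets π y q i - assets π x p i ≤ (y i - x i)⁺ + ∑ j, π j i * (q j - p j)⁺ := by
    rw [assets, assets, add_sub_add_comm, ← sum_sub_distrib]
    gcongr with j
    · exact le_posPart _
    · rw [← mul_sub]
      exact mul_le_mul_of_nonneg_left (le_posPart _) (hπ j i)
  have hnonneg : 0 ≤ (y i - x i)⁺ + ∑ j, π j i * (q j - p j)⁺ :=
    add_nonneg (posPart_nonneg _) (sum_nonneg fun j _ => mul_nonneg (hπ j i) (posPart_nonneg _))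
  unfold clearingMap
  rcases le_total (assets π x p i) (b i) with h | h
  · rw [min_eq_right h]
    linarith [min_le_right (b i) (assets π y q i)]
  · rw [min_eq_left h]
    linarith [min_le_left (b i) (assets π y q i)]

variable {c : ℝ}

lemma sum_posPart_sub_le (hπ : ∀ i j, 0 ≤ π i j) (hc : ∀ j, ∑ i, π j i ≤ c)
    {x y p q : ι → ℝ} (hq : q ≤ clearingMap π b y q) (hp : clearingMap π b x p ≤ p) :
    (1 - c) * ∑ i, (q i - p i)⁺ ≤ ∑ i, (y i - x i)⁺ := by
  have hpoint : ∀ i, (q i - p i)⁺ ≤ (y i - x i)⁺ + ∑ j, π j i * (q j - p j)⁺ := by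
    intro i
    rw [posPart_def]
    exact sup_le ((sub_le_sub (hq i) (hp i)).trans (clearingMap_sub_clearingMap_le hπ x y p q i))
      (add_nonneg (posPart_nonneg _) (sum_nonneg fun j _ =>
        mul_nonneg (hπ j i) (posPart_nonneg _)))
  have hsum : ∑ i, (q i - p i)⁺ ≤ ∑ i, (y i - x i)⁺ + c * ∑ i, (q i - p i)⁺ :=
    calc ∑ i, (q i - p i)⁺
        ≤ ∑ i, ((y i - x i)⁺ + ∑ j, π j i * (q j - p j)⁺) := sum_le_sum fun i _ => hpoint i
      _ = ∑ i, (y i - x i)⁺ + ∑ j, (∑ i, π j i) * (q j - p j)⁺ := by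
          rw [sum_add_distrib, sum_comm]
          simp only [sum_mul]
      _ ≤ ∑ i, (y i - x i)⁺ + c * ∑ i, (q i - p i)⁺ := by
          rw [mul_sum]
          gcongr with j
          exact hc j
  linarith

lemma sub_le_of_le_clearingMap (hπ : ∀ i j, 0 ≤ π i j) (hc : ∀ j, ∑ i, π j i ≤ c) (hc1 : c < 1)
    {x y p q : ι → ℝ} (hq : q ≤ clearingMap π b y q) (hp : clearingMap π b x p ≤ p) (i : ι) :
    (1 - c) * (q i - p i) ≤ ∑ k, (y k - x k)⁺ :=
  calc (1 - c) * (q i - p i)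
      ≤ (1 - c) * ∑ k, (q k - p k)⁺ :=
        mul_le_mul_of_nonneg_left ((le_posPart _).trans
          (single_le_sum (f := fun k => (q k - p k)⁺) (fun k _ => posPart_nonneg _) (mem_univ i)))
          (by linarith)
    _ ≤ ∑ k, (y k - x k)⁺ := sum_posPart_sub_le hπ hc hq hp

lemma le_of_le_clearingMap (hπ : ∀ i j, 0 ≤ π i j) (hc : ∀ j, ∑ i, π j i ≤ c) (hc1 : c < 1)
    {x p q : ι → ℝ} (hq : q ≤ clearingMap π b x q) (hp : clearingMap π b x p ≤ p) : q ≤ p := by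
  intro i
  have h := sub_le_of_le_clearingMap hπ hc hc1 hq hp i
  simp only [sub_self, posPart_zero, sum_const_zero] at h
  nlinarith

lemma lipschitzOnWith_of_eq_clearingMap (hπ : ∀ i j, 0 ≤ π i j) (hc : ∀ j, ∑ i, π j i ≤ c)
    (hc1 : c < 1) {F : (ι → ℝ) → ι → ℝ} {s : Set (ι → ℝ)}
    (hF : ∀ x ∈ s, F x = clearingMap π b x (F x)) :
    LipschitzOnWith (Real.toNNReal (Fintype.card ι / (1 - c))) F s := by
  have h1c : 0 < 1 - c := by linarith
  have hsub : ∀ x ∈ s, ∀ y ∈ s, ∀ i, F y i - F x i ≤ Fintype.card ι / (1 - c) * dist x y := by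
    intro x hx y hy i
    rw [div_mul_eq_mul_div, le_div_iff₀' h1c]
    calc (1 - c) * (F y i - F x i)
        ≤ ∑ k, (y k - x k)⁺ := sub_le_of_le_clearingMap hπ hc hc1 (hF y hy).le (hF x hx).ge i
      _ ≤ ∑ _k : ι, dist x y := by
          gcongr with k
          rw [posPart_def, dist_comm]
          exact sup_le ((le_abs_self _).trans (dist_le_pi_dist y x k)) dist_nonneg
      _ = Fintype.card ι * dist x y := by simp
  refine LipschitzOnWith.of_dist_le' fun x hx y hy => ?_
  rw [dist_pi_le_iff (by positivity)]
  intro i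
  rw [Real.dist_eq, abs_sub_le_iff]
  exact ⟨(hsub y hy x hx i).trans_eq (by rw [dist_comm]), hsub x hx y hy i⟩

end ClearingMap

section Expectation

variable {Ω ι : Type*} [MeasurableSpace Ω] {μ : Measure Ω} [Fintype ι]
  {π : ι → ι → ℝ} {b : ι → ℝ} {X Y : Ω → ι → ℝ}

lemma integrable_assets (hX : ∀ i, Integrable (fun ω => X ω i) μ)
    (hY : ∀ i, Integrable (fun ω => Y ω i) μ) (i : ι) :
    Integrable (fun ω => assets π (X ω) (Y ω) i) μ :=
  (hX i).add (integrable_finsetSum _ fun j _ => (hY j).const_mul _)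

lemma integral_assets (hX : ∀ i, Integrable (fun ω => X ω i) μ)
    (hY : ∀ i, Integrable (fun ω => Y ω i) μ) (i : ι) :
    ∫ ω, assets π (X ω) (Y ω) i ∂μ =
      assets π (fun k => ∫ ω, X ω k ∂μ) (fun k => ∫ ω, Y ω k ∂μ) i := by
  unfold assets
  rw [integral_add (hX i) (integrable_finsetSum _ fun j _ => (hY j).const_mul _),
    integral_finsetSum _ fun j _ => (hY j).const_mul _]
  simp only [integral_const_mul]

lemma integral_clearingMap_le [IsProbabilityMeasure μ] (hX : ∀ i, Integrable (fun ω => X ω i) μ)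
    (hY : ∀ i, Integrable (fun ω => Y ω i) μ) (i : ι) :
    ∫ ω, clearingMap π b (X ω) (Y ω) i ∂μ ≤
      clearingMap π b (fun k => ∫ ω, X ω k ∂μ) (fun k => ∫ ω, Y ω k ∂μ) i := by
  have hint : Integrable (fun ω => clearingMap π b (X ω) (Y ω) i) μ :=
    (integrable_const (b i)).inf (integrable_assets hX hY i)
  refine le_min ?_ ?_
  · calc ∫ ω, clearingMap π b (X ω) (Y ω) i ∂μ ≤ ∫ _ω, b i ∂μ :=
          integral_mono hint (integrable_const _) fun ω => min_le_left _ _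
      _ = b i := by simp
  · calc ∫ ω, clearingMap π b (X ω) (Y ω) i ∂μ ≤ ∫ ω, assets π (X ω) (Y ω) i ∂μ :=
          integral_mono hint (integrable_assets hX hY i) fun ω => min_le_right _ _
      _ = _ := integral_assets hX hY i

lemma integrable_of_eq_clearingMap [IsFiniteMeasure μ] (hπ : ∀ i j, 0 ≤ π i j) {c : ℝ}
    (hc : ∀ j, ∑ i, π j i ≤ c) (hc1 : c < 1) {F : (ι → ℝ) → ι → ℝ} {s : Set (ι → ℝ)}
    (hF : ∀ x ∈ s, F x = clearingMap π b x (F x)) (hF0 : ∀ x ∈ s, 0 ≤ F x)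
    (hX : Measurable X) (hXs : ∀ ω, X ω ∈ s) (i : ι) :
    Integrable (fun ω => F (X ω) i) μ := by
  have hmeas : Measurable fun ω => F (X ω) :=
    (lipschitzOnWith_of_eq_clearingMap hπ hc hc1 hF).continuousOn.domRestrict.measurable.comp
      (hX.subtype_mk (h := hXs))
  refine Integrable.of_bound ((measurable_pi_apply i).comp hmeas).aestronglyMeasurable (b i)
    (ae_of_all _ fun ω => ?_)
  rw [Real.norm_of_nonneg (hF0 _ (hXs ω) i), hF _ (hXs ω)]
  exact min_le_left _ _

end Expectation

theorem jensen_upper_bound_general (n : ℕ)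
    (L : Matrix (Fin n) (Fin (n + 1)) ℝ)
    (hL : ∀ i j, 0 ≤ L i j)
    (hreg : ∀ i, 0 < pbar L i ∧ ∑ j, relLiab L i j < 1)
    (P : (Fin n → ℝ) → (Fin n → ℝ))
    (hP : ∀ x : Fin n → ℝ, (∀ i, 0 ≤ x i) → IsGreatestClearingPayment L x (P x))
    (Ω : Type) (mΩ : MeasurableSpace Ω) (ℙ : Measure Ω) (hprob : IsProbabilityMeasure ℙ)
    (X : Ω → Fin n → ℝ) (hXm : Measurable X) (hXpos : ∀ ω i, 0 ≤ X ω i)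
    (hXint : ∀ i, Integrable (fun ω => X ω i) ℙ) :
    ∀ i : Fin n,
      (∫ ω, (X ω i + (∑ j, relLiab L j i * P (X ω) j) - pbar L i) ∂ℙ
        ≤ (∫ ω, X ω i ∂ℙ)
            + (∑ j, relLiab L j i * P (fun k => ∫ ω, X ω k ∂ℙ) j) - pbar L i)
      ∧ (∫ ω, P (X ω) i ∂ℙ ≤ P (fun k => ∫ ω, X ω k ∂ℙ) i) := by
  obtain ⟨c, hc1, hc⟩ := exists_lt_forall_le_of_forall_lt fun j => (hreg j).2
  have hπ := relLiab_nonneg hL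
  have hfix : ∀ x ∈ {x : Fin n → ℝ | ∀ i, 0 ≤ x i},
      P x = clearingMap (relLiab L) (pbar L) x (P x) := fun x hx => funext (hP x hx).1.2
  have hPXint : ∀ k, Integrable (fun ω => P (X ω) k) ℙ :=
    integrable_of_eq_clearingMap hπ hc hc1 hfix (fun x hx k => ((hP x hx).1.1 k).1) hXm hXpos
  set EX : Fin n → ℝ := fun k => ∫ ω, X ω k ∂ℙ
  set EP : Fin n → ℝ := fun k => ∫ ω, P (X ω) k ∂ℙ
  have hEP : EP ≤ P EX := by
    refine le_of_le_clearingMap hπ hc hc1 (fun k => ?_) (hfix EX ?_).ge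
    · calc EP k = ∫ ω, clearingMap (relLiab L) (pbar L) (X ω) (P (X ω)) k ∂ℙ := by
            simp_rw [EP, ← hfix _ (hXpos _)]
        _ ≤ clearingMap (relLiab L) (pbar L) EX EP k := integral_clearingMap_le hXint hPXint k
    · exact fun k => integral_nonneg fun ω => hXpos ω k
  intro i
  refine ⟨?_, hEP i⟩
  calc ∫ ω, (X ω i + (∑ j, relLiab L j i * P (X ω) j) - pbar L i) ∂ℙ
      = assets (relLiab L) EX EP i - pbar L i := by
        change ∫ ω, assets (relLiab L) (X ω) (P (X ω)) i - pbar L i ∂ℙ = _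
        rw [integral_sub (integrable_assets hXint hPXint i) (integrable_const _),
          integral_assets hXint hPXint i, integral_const, probReal_univ, one_smul]
    _ ≤ assets (relLiab L) EX (P EX) i - pbar L i := by
        gcongr
        exact assets_mono hπ EX hEP i

/-- In the Eisenberg–Noe setting under the regularity assumption, for an integrable random
endowment vector `X`, the Jensen upper bounds hold for every bank `i`:
`𝔼[V_i(X)] ≤ V_i(𝔼[X])` and `𝔼[p_i(X)] ≤ p_i(𝔼[X])`. -/
theorem jensen_upper_bound (n : ℕ) (hn : 1 ≤ n)
    (L : Matrix (Fin n) (Fin (n + 1)) ℝ)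
    (hL : ∀ i j, 0 ≤ L i j) (hLdiag : ∀ i : Fin n, L i i.castSucc = 0)
    (hreg : ∀ i, 0 < pbar L i ∧ ∑ j, relLiab L i j < 1)
    (P : (Fin n → ℝ) → (Fin n → ℝ))
    (hP : ∀ x : Fin n → ℝ, (∀ i, 0 ≤ x i) → IsGreatestClearingPayment L x (P x))
    (Ω : Type) (mΩ : MeasurableSpace Ω) (ℙ : Measure Ω) (hprob : IsProbabilityMeasure ℙ)
    (X : Ω → Fin n → ℝ) (hXm : Measurable X) (hXpos : ∀ ω i, 0 ≤ X ω i)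
    (hXint : ∀ i, Integrable (fun ω => X ω i) ℙ) :
    ∀ i : Fin n,
      (∫ ω, (X ω i + (∑ j, relLiab L j i * P (X ω) j) - pbar L i) ∂ℙ
        ≤ (∫ ω, X ω i ∂ℙ)
            + (∑ j, relLiab L j i * P (fun k => ∫ ω, X ω k ∂ℙ) j) - pbar L i)
      ∧ (∫ ω, P (X ω) i ∂ℙ ≤ P (fun k => ∫ ω, X ω k ∂ℙ) i) :=
  jensen_upper_bound_general n L hL hreg P hP Ω mΩ ℙ hprob X hXm hXpos hXint
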